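/- arXiv:2311.18566 — 3 statements merged into one kernel-verified Lean document; each statement's English description precedes it below -/
import Mathlib

section
/- In particular, for m independent SWAP tests between the subsystems of ρ and the product state σ = ⊗_{i=1}^m |ψ_i⟩⟨ψ_i|, the probability that all m tests accept is 2^{-m} Σ_{S⊆[m]} Tr(ρ_S ⊗_{i∈S} |ψ_i⟩⟨ψ_i|), which is at most 2^{-m}(1 + Σ_{∅≠S⊆[m]} Tr(ρ_S ⊗_{i∈S}|ψ_i⟩⟨ψ_i|)) and hence at most 2^{-m} + max_{∅≠S} Tr(ρ_S ⊗_{i∈S}|ψ_i⟩⟨ψ_i|). -/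
open Matrix
open scoped ComplexOrder Kronecker
noncomputable section

/-- Square root of a matrix: the PSD square root if the matrix is PSD, else 0. -/
noncomputable def matSqrt {n : Type*} [Fintype n] [DecidableEq n]
    (A : Matrix n n ℂ) : Matrix n n ℂ :=
  open scoped Classical in
  if h : A.PosSemidef then
    (h.1.eigenvectorUnitary : Matrix n n ℂ) *
      diagonal ((↑) ∘ (√·) ∘ h.1.eigenvalues) *
      (star h.1.eigenvectorUnitary : Matrix n n ℂ)
  else 0

/-- Trace norm ‖A‖₁ = Tr √(AᴴA). -/
noncomputable def traceNorm {n : Type*} [Fintype n] [DecidableEq n]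
    (A : Matrix n n ℂ) : ℝ :=
  (Matrix.trace (matSqrt (Aᴴ * A))).re

/-- Trace distance TD(ρ,σ) = (1/2)‖ρ−σ‖₁. -/
noncomputable def TD {n : Type*} [Fintype n] [DecidableEq n]
    (ρ σ : Matrix n n ℂ) : ℝ :=
  traceNorm (ρ - σ) / 2

/-- Uhlmann fidelity F(ρ,σ) = (Tr √(√σ ρ √σ))². -/
noncomputable def fidelity {n : Type*} [Fintype n] [DecidableEq n]
    (ρ σ : Matrix n n ℂ) : ℝ :=
  ((Matrix.trace (matSqrt (matSqrt σ * ρ * matSqrt σ))).re) ^ 2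

/-- ρ is a density matrix: positive semidefinite with unit trace. -/
def IsDensity {n : Type*} [Fintype n] [DecidableEq n]
    (ρ : Matrix n n ℂ) : Prop :=
  ρ.PosSemidef ∧ ρ.trace = 1

variable {m d : ℕ}

/-- Merge an assignment on registers in `S` with one on registers outside `S`. -/
def mergeFn (S : Finset (Fin m)) (a : {i // i ∈ S} → Fin d)
    (c : {i // i ∉ S} → Fin d) : Fin m → Fin d :=
  fun i => if h : i ∈ S then a ⟨i, h⟩ else c ⟨i, h⟩

/-- Reduced state ρ_S: all registers outside `S` are traced out. -/
noncomputable def reduce (S : Finset (Fin m))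
    (ρ : Matrix (Fin m → Fin d) (Fin m → Fin d) ℂ) :
    Matrix ({i // i ∈ S} → Fin d) ({i // i ∈ S} → Fin d) ℂ :=
  Matrix.of fun a b => ∑ c : {i // i ∉ S} → Fin d,
    ρ (mergeFn S a c) (mergeFn S b c)

/-- The permutation of (A,B) register assignments that swaps A_i and B_i for
every i ∈ S. -/
def swapFn (S : Finset (Fin m))
    (p : (Fin m → Fin d) × (Fin m → Fin d)) :
    (Fin m → Fin d) × (Fin m → Fin d) :=
  (fun i => if i ∈ S then p.2 i else p.1 i,
   fun i => if i ∈ S then p.1 i else p.2 i)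

/-- The unitary SWAP_S swapping registers A_i ↔ B_i for i ∈ S. -/
noncomputable def swapMat (S : Finset (Fin m)) :
    Matrix ((Fin m → Fin d) × (Fin m → Fin d))
           ((Fin m → Fin d) × (Fin m → Fin d)) ℂ :=
  Matrix.of fun p q => if p = swapFn S q then 1 else 0

/-- The projector onto the all-accept outcome of m parallel SWAP tests between
A_i and B_i (i ∈ [m]); it equals ⊗_{i∈[m]} (I + SWAP_i)/2 = 2^{-m} Σ_S SWAP_S,
so the acceptance probability is its expectation in the tested state. -/
noncomputable def swapTestAcceptProj (m d : ℕ) :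
    Matrix ((Fin m → Fin d) × (Fin m → Fin d))
           ((Fin m → Fin d) × (Fin m → Fin d)) ℂ :=
  ((2 : ℂ) ^ m)⁻¹ • ∑ S : Finset (Fin m), swapMat S

/-- The product pure state ⊗_{i=1}^m |ψ_i⟩ as a vector on m registers. -/
def prodVec (ψ : Fin m → Fin d → ℂ) : (Fin m → Fin d) → ℂ :=
  fun a => ∏ i, ψ i (a i)

/-! Expanding the accepting projector as `2^{-m} ∑_S SWAP_S`, the swap trick turns each
`Tr (SWAP_S (ρ ⊗ σ))` into `Tr (ρ_S σ_S)`. The term `S = ∅` is `Tr ρ · Tr σ = 1`. The other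
terms are nonnegative, because partial traces of positive semidefinite matrices are positive
semidefinite and `Tr (P Q) ≥ 0` for such `P, Q`; there are fewer than `2^m` of them, each at most
their maximum. -/

open Finset

open scoped MatrixOrder in
theorem Matrix.PosSemidef.trace_mul_nonneg {n 𝕜 : Type*} [Fintype n] [RCLike 𝕜] {A B : Matrix n n 𝕜}
    (hA : A.PosSemidef) (hB : B.PosSemidef) : 0 ≤ (A * B).trace := by
  classical
  obtain ⟨X, rfl⟩ := CStarAlgebra.nonneg_iff_eq_star_mul_self.mp hA.nonneg
  rw [mul_assoc, trace_mul_comm, star_eq_conjTranspose]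
  exact (hB.mul_mul_conjTranspose_same X).trace_nonneg

lemma reduce_eq_sum_submatrix (S : Finset (Fin m))
    (A : Matrix (Fin m → Fin d) (Fin m → Fin d) ℂ) :
    reduce S A = ∑ c, A.submatrix (mergeFn S · c) (mergeFn S · c) := by
  ext a b
  simp [reduce, Matrix.sum_apply]

lemma Matrix.PosSemidef.reduce {A : Matrix (Fin m → Fin d) (Fin m → Fin d) ℂ}
    (hA : A.PosSemidef) (S : Finset (Fin m)) : (reduce S A).PosSemidef := by
  rw [reduce_eq_sum_submatrix]
  exact posSemidef_sum _ fun c _ => hA.submatrix _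

lemma sum_mergeFn {M : Type*} [AddCommMonoid M] (S : Finset (Fin m)) (f : (Fin m → Fin d) → M) :
    ∑ a, ∑ c, f (mergeFn S a c) = ∑ x, f x := by
  rw [← Fintype.sum_prod_type',
    ← (Equiv.piEquivPiSubtypeProd (· ∈ S) (fun _ => Fin d)).symm.sum_comp]
  -- `mergeFn S` is the uncurried inverse of `Equiv.piEquivPiSubtypeProd`
  rfl

lemma sum_prod_mergeFn {M : Type*} [AddCommMonoid M] (S : Finset (Fin m))
    (f : (Fin m → Fin d) × (Fin m → Fin d) → M) :
    ∑ q, f q = ∑ a, ∑ c, ∑ b, ∑ c', f (mergeFn S a c, mergeFn S b c') := by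
  rw [Fintype.sum_prod_type, ← sum_mergeFn S]
  exact sum_congr rfl fun a _ => sum_congr rfl fun c _ => (sum_mergeFn S _).symm

lemma trace_reduce (S : Finset (Fin m)) (A : Matrix (Fin m → Fin d) (Fin m → Fin d) ℂ) :
    (reduce S A).trace = A.trace :=
  sum_mergeFn S fun x => A x x

lemma trace_reduce_empty_mul (A B : Matrix (Fin m → Fin d) (Fin m → Fin d) ℂ) :
    (reduce ∅ A * reduce ∅ B).trace = A.trace * B.trace := by
  rw [← trace_reduce ∅ A, ← trace_reduce ∅ B]
  simp [trace, mul_apply]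

lemma swapFn_mergeFn (S : Finset (Fin m)) (a b : {i // i ∈ S} → Fin d)
    (c c' : {i // i ∉ S} → Fin d) :
    swapFn S (mergeFn S a c, mergeFn S b c') = (mergeFn S b c, mergeFn S a c') := by
  ext i <;> by_cases h : i ∈ S <;> simp [swapFn, mergeFn, h]

lemma trace_swapMat_mul (S : Finset (Fin m))
    (X : Matrix ((Fin m → Fin d) × (Fin m → Fin d)) ((Fin m → Fin d) × (Fin m → Fin d)) ℂ) :
    (swapMat S * X).trace = ∑ q, X q (swapFn S q) := by
  rw [trace_mul_comm]
  simp [trace, mul_apply, swapMat]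

lemma trace_swapMat_mul_kronecker (S : Finset (Fin m))
    (A B : Matrix (Fin m → Fin d) (Fin m → Fin d) ℂ) :
    (swapMat S * (A ⊗ₖ B)).trace = (reduce S A * reduce S B).trace := by
  rw [trace_swapMat_mul, sum_prod_mergeFn S]
  simp only [swapFn_mergeFn, kroneckerMap_apply, trace, Matrix.diag, mul_apply, reduce, of_apply,
    sum_mul_sum]
  exact sum_congr rfl fun _ _ => sum_comm

lemma trace_swapTestAcceptProj_mul_kronecker (A B : Matrix (Fin m → Fin d) (Fin m → Fin d) ℂ) :
    (swapTestAcceptProj m d * (A ⊗ₖ B)).trace =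
      ((2 : ℂ) ^ m)⁻¹ * ∑ S : Finset (Fin m), (reduce S A * reduce S B).trace := by
  simp only [swapTestAcceptProj, smul_mul_assoc, trace_smul, sum_mul, trace_sum, smul_eq_mul,
    trace_swapMat_mul_kronecker]

lemma trace_vecMulVec_prodVec (ψ : Fin m → Fin d → ℂ) :
    (vecMulVec (prodVec ψ) (star (prodVec ψ))).trace = ∏ i, ((∑ j, ‖ψ i j‖ ^ 2 : ℝ) : ℂ) := by
  simp only [trace_vecMulVec, dotProduct, prodVec, Pi.star_apply, star_prod, ← prod_mul_distrib,
    RCLike.star_def, Complex.mul_conj, Complex.normSq_eq_norm_sq, Complex.ofReal_sum]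
  exact (Fintype.prod_sum fun i j => ((‖ψ i j‖ ^ 2 : ℝ) : ℂ)).symm

lemma sum_filter_le_card_mul_iSup {ι : Type*} [Fintype ι] (p : ι → Prop) [DecidablePred p]
    {f : ι → ℝ} (hf : ∀ i, 0 ≤ f i) :
    ∑ i ∈ univ.filter p, f i ≤ Fintype.card ι * ⨆ i : {i // p i}, f i := by
  have hle : ∀ i : {i // p i}, f i ≤ ⨆ i : {i // p i}, f i :=
    le_ciSup (Set.finite_range _).bddAbove
  calc ∑ i ∈ univ.filter p, f i = ∑ i : {i // p i}, f i := sum_subtype _ (by simp) f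
    _ ≤ Fintype.card {i // p i} * ⨆ i : {i // p i}, f i := by
      simpa using sum_le_card_nsmul univ _ _ fun i _ => hle i
    _ ≤ Fintype.card ι * ⨆ i : {i // p i}, f i := by
      gcongr
      · exact Real.iSup_nonneg fun i => hf i
      · exact Fintype.card_subtype_le p

theorem parallel_swapTest_product_bound_general
    (m d : ℕ)
    (ρ : Matrix (Fin m → Fin d) (Fin m → Fin d) ℂ) (hρ : IsDensity ρ)
    (ψ : Fin m → Fin d → ℂ) (hψ : ∀ i, ∑ j, ‖ψ i j‖ ^ 2 = 1) :
    (Matrix.trace (swapTestAcceptProj m d *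
        (ρ ⊗ₖ Matrix.vecMulVec (prodVec ψ) (star (prodVec ψ))))).re =
      ((2 : ℝ) ^ m)⁻¹ * ∑ S : Finset (Fin m),
        (Matrix.trace (reduce S ρ *
          reduce S (Matrix.vecMulVec (prodVec ψ) (star (prodVec ψ))))).re ∧
    ((2 : ℝ) ^ m)⁻¹ * (∑ S : Finset (Fin m),
        (Matrix.trace (reduce S ρ *
          reduce S (Matrix.vecMulVec (prodVec ψ) (star (prodVec ψ))))).re) ≤
      ((2 : ℝ) ^ m)⁻¹ * (1 + ∑ S ∈ Finset.univ.filter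
            (fun S : Finset (Fin m) => S.Nonempty),
        (Matrix.trace (reduce S ρ *
          reduce S (Matrix.vecMulVec (prodVec ψ) (star (prodVec ψ))))).re) ∧
    ((2 : ℝ) ^ m)⁻¹ * (1 + ∑ S ∈ Finset.univ.filter
            (fun S : Finset (Fin m) => S.Nonempty),
        (Matrix.trace (reduce S ρ *
          reduce S (Matrix.vecMulVec (prodVec ψ) (star (prodVec ψ))))).re) ≤
      ((2 : ℝ) ^ m)⁻¹ + ⨆ S : {S : Finset (Fin m) // S.Nonempty},
        (Matrix.trace (reduce S.1 ρ *
          reduce S.1 (Matrix.vecMulVec (prodVec ψ) (star (prodVec ψ))))).re := by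
  set σ := vecMulVec (prodVec ψ) (star (prodVec ψ))
  set t : Finset (Fin m) → ℝ := fun S => (trace (reduce S ρ * reduce S σ)).re
  have ht_empty : t ∅ = 1 := by
    simp only [t, σ, trace_reduce_empty_mul, hρ.2, trace_vecMulVec_prodVec, hψ]
    simp
  have ht_nonneg : ∀ S, 0 ≤ t S := fun S =>
    (Complex.nonneg_iff.mp <| (hρ.1.reduce S).trace_mul_nonneg
      ((posSemidef_vecMulVec_self_star _).reduce S)).1
  have hsplit : ∑ S, t S = 1 + ∑ S ∈ univ.filter (·.Nonempty), t S := by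
    simp_rw [nonempty_iff_ne_empty, filter_ne', ← ht_empty]
    exact (add_sum_erase _ _ (mem_univ ∅)).symm
  have hsum := sum_filter_le_card_mul_iSup (·.Nonempty) ht_nonneg
  rw [Fintype.card_finset, Fintype.card_fin, Nat.cast_pow, Nat.cast_ofNat] at hsum
  refine ⟨?_, by rw [hsplit], ?_⟩
  · rw [trace_swapTestAcceptProj_mul_kronecker, ← Complex.ofReal_ofNat, ← Complex.ofReal_pow,
      ← Complex.ofReal_inv, Complex.re_ofReal_mul, Complex.re_sum]
  · rw [mul_add, mul_one, add_le_add_iff_left, inv_mul_le_iff₀ (by positivity)]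
    exact hsum

/-- for m parallel SWAP tests between the subsystems of ρ and the
product state σ = ⊗_i |ψ_i⟩⟨ψ_i|, the acceptance probability equals
2^{-m} Σ_{S⊆[m]} Tr(ρ_S σ_S), is at most 2^{-m}(1 + Σ_{∅≠S} Tr(ρ_S σ_S)), and
hence at most 2^{-m} + max_{∅≠S} Tr(ρ_S σ_S). -/
theorem parallel_swapTest_product_bound
    (m d : ℕ) (hm : 0 < m)
    (ρ : Matrix (Fin m → Fin d) (Fin m → Fin d) ℂ) (hρ : IsDensity ρ)
    (ψ : Fin m → Fin d → ℂ) (hψ : ∀ i, ∑ j, ‖ψ i j‖ ^ 2 = 1) :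
    (Matrix.trace (swapTestAcceptProj m d *
        (ρ ⊗ₖ Matrix.vecMulVec (prodVec ψ) (star (prodVec ψ))))).re =
      ((2 : ℝ) ^ m)⁻¹ * ∑ S : Finset (Fin m),
        (Matrix.trace (reduce S ρ *
          reduce S (Matrix.vecMulVec (prodVec ψ) (star (prodVec ψ))))).re ∧
    ((2 : ℝ) ^ m)⁻¹ * (∑ S : Finset (Fin m),
        (Matrix.trace (reduce S ρ *
          reduce S (Matrix.vecMulVec (prodVec ψ) (star (prodVec ψ))))).re) ≤
      ((2 : ℝ) ^ m)⁻¹ * (1 + ∑ S ∈ Finset.univ.filter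
            (fun S : Finset (Fin m) => S.Nonempty),
        (Matrix.trace (reduce S ρ *
          reduce S (Matrix.vecMulVec (prodVec ψ) (star (prodVec ψ))))).re) ∧
    ((2 : ℝ) ^ m)⁻¹ * (1 + ∑ S ∈ Finset.univ.filter
            (fun S : Finset (Fin m) => S.Nonempty),
        (Matrix.trace (reduce S ρ *
          reduce S (Matrix.vecMulVec (prodVec ψ) (star (prodVec ψ))))).re) ≤
      ((2 : ℝ) ^ m)⁻¹ + ⨆ S : {S : Finset (Fin m) // S.Nonempty},
        (Matrix.trace (reduce S.1 ρ *
          reduce S.1 (Matrix.vecMulVec (prodVec ψ) (star (prodVec ψ))))).re :=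
  parallel_swapTest_product_bound_general m d ρ hρ ψ hψ
end
end

section
/- For any density operators ρ, σ, ξ on the same finite-dimensional Hilbert space, F(ρ,ξ) + F(σ,ξ) ≤ 1 + √F(ρ,σ). -/
open Matrix
open scoped ComplexOrder Kronecker
noncomputable section

/-!
Write `√ρ` for the positive square root and view matrices as vectors of the Hilbert–Schmidt space.
For a density matrix `ρ` and a unitary `U`, the vector `√ρ U*` is a unit vector (a purification of
`ρ`). Polar decomposition `X = W |X|` shows that `|Tr (U X)| ≤ ‖X‖₁` for every unitary `U`, with
equality for `U = W*`; since `√F(ρ, ξ) = ‖√ρ √ξ‖₁`, suitable purifications `u, v, w` of `ρ, σ, ξ`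
satisfy `⟪u, w⟫ = √F(ρ, ξ)`, `⟪v, w⟫ = √F(σ, ξ)` and `|⟪u, v⟫| ≤ √F(ρ, σ)`. It remains to show
`|⟪u, w⟫|² + |⟪v, w⟫|² ≤ 1 + |⟪u, v⟫|` for unit vectors: with `x = ⟪u, w⟫ u + ⟪v, w⟫ v` and
`s = |⟪u, w⟫|² + |⟪v, w⟫|²` we have `s = ⟪x, w⟫ ≤ ‖x‖` and `‖x‖² ≤ s (1 + |⟪u, v⟫|)`.
-/

theorem LinearMap.exists_linearIsometry_rangeRestrict_eq {R V W : Type*} [Ring R]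
    [AddCommGroup V] [Module R V] [NormedAddCommGroup W] [Module R W]
    (f g : V →ₗ[R] W) (h : ∀ v, ‖f v‖ = ‖g v‖) :
    ∃ L : range g →ₗᵢ[R] W, ∀ v, L (g.rangeRestrict v) = f v := by
  have hker : ker g ≤ ker f := fun v hv => by
    rw [mem_ker, ← norm_eq_zero, h, norm_eq_zero, ← mem_ker]
    exact hv
  let L := (ker g).liftQ f hker ∘ₗ g.quotKerEquivRange.symm.toLinearMap
  have hL : ∀ v, L (g.rangeRestrict v) = f v := fun v => by
    simp only [L, comp_apply, LinearEquiv.coe_coe]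
    rw [(LinearEquiv.symm_apply_eq _).mpr (Subtype.ext (quotKerEquivRange_apply_mk g v).symm)]
    rfl
  refine ⟨⟨L, ?_⟩, hL⟩
  rintro ⟨_, v, rfl⟩
  exact (congrArg norm (hL v)).trans (h v)

theorem ContinuousLinearMap.exists_unitary_mul_eq_of_star_mul_self_eq {𝕜 E : Type*} [RCLike 𝕜]
    [NormedAddCommGroup E] [InnerProductSpace 𝕜 E] [CompleteSpace E] [FiniteDimensional 𝕜 E]
    {S T : E →L[𝕜] E} (h : star S * S = star T * T) :
    ∃ U ∈ unitary (E →L[𝕜] E), S = U * T := by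
  have hnorm : ∀ v, ‖S v‖ = ‖T v‖ := fun v => by
    rw [← sq_eq_sq₀ (norm_nonneg _) (norm_nonneg _), apply_norm_sq_eq_inner_adjoint_left,
      apply_norm_sq_eq_inner_adjoint_left, ← star_eq_adjoint, ← star_eq_adjoint]
    exact congrArg (fun A : E →L[𝕜] E => RCLike.re (inner 𝕜 (A v) v)) h
  obtain ⟨L, hL⟩ := LinearMap.exists_linearIsometry_rangeRestrict_eq
    (S : E →ₗ[𝕜] E) (T : E →ₗ[𝕜] E) hnorm
  let U := Unitary.linearIsometryEquiv.symm (L.extend.toLinearIsometryEquiv rfl)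
  refine ⟨U, U.2, ContinuousLinearMap.ext fun v => ?_⟩
  exact ((L.extend_apply _).trans (hL v)).symm

theorem Matrix.exists_unitary_mul_eq_of_conjTranspose_mul_self_eq {𝕜 n : Type*} [RCLike 𝕜]
    [Fintype n] [DecidableEq n] {S T : Matrix n n 𝕜} (h : Sᴴ * S = Tᴴ * T) :
    ∃ U ∈ unitaryGroup n 𝕜, S = U * T := by
  let Φ := toEuclideanCLM (n := n) (𝕜 := 𝕜)
  obtain ⟨U, hU, hST⟩ := ContinuousLinearMap.exists_unitary_mul_eq_of_star_mul_self_eq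
    (S := Φ S) (T := Φ T) (by simp only [← map_star, ← map_mul, star_eq_conjTranspose, h])
  refine ⟨Φ.symm U, Unitary.map_mem _ hU, ?_⟩
  rw [← Φ.symm_apply_apply S, hST, map_mul, Φ.symm_apply_apply]

def Matrix.hilbertSchmidtVec {𝕜 m n : Type*} (M : Matrix m n 𝕜) : EuclideanSpace 𝕜 (m × n) :=
  WithLp.toLp 2 (Function.uncurry M)

theorem Matrix.inner_hilbertSchmidtVec {𝕜 m n : Type*} [RCLike 𝕜] [Fintype m] [Fintype n]
    (M N : Matrix m n 𝕜) :
    inner 𝕜 M.hilbertSchmidtVec N.hilbertSchmidtVec = trace (Mᴴ * N) := by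
  simp only [hilbertSchmidtVec, PiLp.inner_apply, RCLike.inner_apply', trace, diag, mul_apply,
    conjTranspose_apply, Fintype.sum_prod_type, RCLike.star_def]
  exact Finset.sum_comm

theorem Matrix.norm_hilbertSchmidtVec_sq {𝕜 m n : Type*} [RCLike 𝕜] [Fintype m] [Fintype n]
    (M : Matrix m n 𝕜) : ‖M.hilbertSchmidtVec‖ ^ 2 = RCLike.re (trace (Mᴴ * M)) := by
  rw [← inner_self_eq_norm_sq (𝕜 := 𝕜), inner_hilbertSchmidtVec]

section InnerProductSpace

variable {𝕜 E : Type*} [RCLike 𝕜] [NormedAddCommGroup E] [InnerProductSpace 𝕜 E]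

theorem norm_smul_add_smul_sq_le {u v : E} (hu : ‖u‖ = 1) (hv : ‖v‖ = 1) (a b : 𝕜) :
    ‖a • u + b • v‖ ^ 2 ≤ (‖a‖ ^ 2 + ‖b‖ ^ 2) * (1 + ‖inner 𝕜 u v‖) := by
  have hcross : RCLike.re (inner 𝕜 (a • u) (b • v)) ≤ ‖a‖ * ‖b‖ * ‖inner 𝕜 u v‖ :=
    calc RCLike.re (inner 𝕜 (a • u) (b • v)) ≤ ‖inner 𝕜 (a • u) (b • v)‖ := RCLike.re_le_norm _
      _ = ‖a‖ * ‖b‖ * ‖inner 𝕜 u v‖ := by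
        rw [inner_smul_left, inner_smul_right, norm_mul, norm_mul, RCLike.norm_conj, mul_assoc]
  rw [norm_add_sq (𝕜 := 𝕜), norm_smul, norm_smul, hu, hv]
  nlinarith [sq_nonneg (‖a‖ - ‖b‖), norm_nonneg (inner 𝕜 u v)]

theorem norm_inner_sq_add_norm_inner_sq_le {u v w : E} (hu : ‖u‖ = 1) (hv : ‖v‖ = 1)
    (hw : ‖w‖ = 1) :
    ‖inner 𝕜 u w‖ ^ 2 + ‖inner 𝕜 v w‖ ^ 2 ≤ 1 + ‖inner 𝕜 u v‖ := by
  set a := inner 𝕜 u w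
  set b := inner 𝕜 v w
  set s := ‖a‖ ^ 2 + ‖b‖ ^ 2
  have hs : s ≤ ‖a • u + b • v‖ :=
    calc s = ‖inner 𝕜 (a • u + b • v) w‖ := by
          rw [inner_add_left, inner_smul_left, inner_smul_left, RCLike.conj_mul, RCLike.conj_mul]
          norm_cast
          exact (abs_of_nonneg (by positivity)).symm
      _ ≤ ‖a • u + b • v‖ := by simpa [hw] using norm_inner_le_norm (𝕜 := 𝕜) (a • u + b • v) w
  nlinarith [norm_smul_add_smul_sq_le hu hv a b, norm_nonneg (inner 𝕜 u v),
    norm_nonneg a, norm_nonneg b]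

end InnerProductSpace

theorem Matrix.PosSemidef.ofReal_re_trace {n : Type*} [Fintype n] {P : Matrix n n ℂ}
    (hP : P.PosSemidef) : ((trace P).re : ℂ) = trace P :=
  (Complex.eq_re_of_ofReal_le (r := 0) (by rw [Complex.ofReal_zero]; exact hP.trace_nonneg)).symm

section matSqrt

open scoped MatrixOrder

variable {n : Type*} [Fintype n] [DecidableEq n]

theorem matSqrt_eq_cfcSqrt {A : Matrix n n ℂ} (h : A.PosSemidef) : matSqrt A = CFC.sqrt A := by
  rw [CFC.sqrt_eq_real_sqrt A h.nonneg, cfcₙ_eq_cfc, h.1.cfc_eq, IsHermitian.cfc,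
    Unitary.conjStarAlgAut_apply, matSqrt, dif_pos h]
  rfl

theorem posSemidef_matSqrt {A : Matrix n n ℂ} (h : A.PosSemidef) : (matSqrt A).PosSemidef := by
  rw [matSqrt_eq_cfcSqrt h]
  exact (CFC.sqrt_nonneg A).posSemidef

theorem matSqrt_mul_self {A : Matrix n n ℂ} (h : A.PosSemidef) : matSqrt A * matSqrt A = A := by
  rw [matSqrt_eq_cfcSqrt h]
  exact CFC.sqrt_mul_sqrt_self A h.nonneg

theorem conjTranspose_matSqrt {A : Matrix n n ℂ} (h : A.PosSemidef) : (matSqrt A)ᴴ = matSqrt A :=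
  (posSemidef_matSqrt h).1.eq

theorem Matrix.PosSemidef.norm_trace_unitary_mul_le {P V : Matrix n n ℂ} (hP : P.PosSemidef)
    (hV : V ∈ unitaryGroup n ℂ) : ‖trace (V * P)‖ ≤ (trace P).re := by
  set Q := matSqrt P
  have hQ : Qᴴ = Q := conjTranspose_matSqrt hP
  have htrace : trace (V * P) = inner ℂ (Q * Vᴴ).hilbertSchmidtVec Q.hilbertSchmidtVec := by
    rw [inner_hilbertSchmidtVec, conjTranspose_mul, conjTranspose_conjTranspose, hQ,
      Matrix.mul_assoc, matSqrt_mul_self hP]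
  have hnormQ : ‖Q.hilbertSchmidtVec‖ ^ 2 = (trace P).re := by
    rw [norm_hilbertSchmidtVec_sq, hQ, matSqrt_mul_self hP]
    rfl
  have hnormQV : ‖(Q * Vᴴ).hilbertSchmidtVec‖ = ‖Q.hilbertSchmidtVec‖ := by
    rw [← sq_eq_sq₀ (norm_nonneg _) (norm_nonneg _), hnormQ, norm_hilbertSchmidtVec_sq,
      conjTranspose_mul, conjTranspose_conjTranspose, hQ, Matrix.mul_assoc, ← Matrix.mul_assoc Q,
      matSqrt_mul_self hP, trace_mul_comm, Matrix.mul_assoc, ← star_eq_conjTranspose,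
      mem_unitaryGroup_iff'.mp hV, Matrix.mul_one]
    rfl
  calc ‖trace (V * P)‖ ≤ ‖(Q * Vᴴ).hilbertSchmidtVec‖ * ‖Q.hilbertSchmidtVec‖ :=
        htrace ▸ norm_inner_le_norm _ _
    _ = (trace P).re := by rw [hnormQV, ← sq, hnormQ]

theorem exists_unitary_mul_matSqrt (X : Matrix n n ℂ) :
    ∃ U ∈ unitaryGroup n ℂ, X = U * matSqrt (Xᴴ * X) := by
  have hXX := posSemidef_conjTranspose_mul_self X
  refine exists_unitary_mul_eq_of_conjTranspose_mul_self_eq ?_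
  rw [conjTranspose_matSqrt hXX, matSqrt_mul_self hXX]

theorem exists_unitary_trace_mul_eq_traceNorm (X : Matrix n n ℂ) :
    ∃ U ∈ unitaryGroup n ℂ, trace (U * X) = traceNorm X := by
  obtain ⟨W, hW, hX⟩ := exists_unitary_mul_matSqrt X
  refine ⟨star W, Unitary.star_mem hW, ?_⟩
  rw [traceNorm, (posSemidef_matSqrt (posSemidef_conjTranspose_mul_self X)).ofReal_re_trace]
  conv_lhs => rw [hX]
  rw [← Matrix.mul_assoc, mem_unitaryGroup_iff'.mp hW, Matrix.one_mul]

theorem norm_trace_unitary_mul_le_traceNorm {U : Matrix n n ℂ} (hU : U ∈ unitaryGroup n ℂ)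
    (X : Matrix n n ℂ) : ‖trace (U * X)‖ ≤ traceNorm X := by
  obtain ⟨W, hW, hX⟩ := exists_unitary_mul_matSqrt X
  calc ‖trace (U * X)‖ = ‖trace (U * W * matSqrt (Xᴴ * X))‖ := by rw [Matrix.mul_assoc, ← hX]
    _ ≤ traceNorm X :=
      (posSemidef_matSqrt (posSemidef_conjTranspose_mul_self X)).norm_trace_unitary_mul_le
        (mul_mem hU hW)

theorem fidelity_eq_traceNorm_sq {ρ ξ : Matrix n n ℂ} (hρ : ρ.PosSemidef) (hξ : ξ.PosSemidef) :
    fidelity ρ ξ = traceNorm (matSqrt ρ * matSqrt ξ) ^ 2 := by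
  rw [fidelity, traceNorm, conjTranspose_mul, conjTranspose_matSqrt hρ, conjTranspose_matSqrt hξ]
  simp only [Matrix.mul_assoc]
  rw [← Matrix.mul_assoc (matSqrt ρ), matSqrt_mul_self hρ]

def purification (ρ U : Matrix n n ℂ) : EuclideanSpace ℂ (n × n) :=
  (matSqrt ρ * star U).hilbertSchmidtVec

theorem inner_purification {ρ : Matrix n n ℂ} (hρ : ρ.PosSemidef) (σ U V : Matrix n n ℂ) :
    inner ℂ (purification ρ U) (purification σ V) =
      trace (star V * U * (matSqrt ρ * matSqrt σ)) := by
  rw [purification, purification, inner_hilbertSchmidtVec, conjTranspose_mul,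
    conjTranspose_matSqrt hρ, ← star_eq_conjTranspose, star_star]
  conv_lhs => rw [← Matrix.mul_assoc, trace_mul_comm]
  simp only [Matrix.mul_assoc]

theorem norm_purification {ρ U : Matrix n n ℂ} (hρ : IsDensity ρ) (hU : U ∈ unitaryGroup n ℂ) :
    ‖purification ρ U‖ = 1 := by
  rw [← pow_eq_one_iff_of_nonneg (norm_nonneg _) two_ne_zero, ← inner_self_eq_norm_sq (𝕜 := ℂ),
    inner_purification hρ.1, mem_unitaryGroup_iff'.mp hU, Matrix.one_mul, matSqrt_mul_self hρ.1,
    hρ.2, RCLike.one_re]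

end matSqrt

/-- for any density operators ρ, σ, ξ,
F(ρ,ξ) + F(σ,ξ) ≤ 1 + √F(ρ,σ). -/
theorem fidelity_sum_le_one_add_sqrt_fidelity
    {n : Type*} [Fintype n] [DecidableEq n] (ρ σ ξ : Matrix n n ℂ)
    (hρ : IsDensity ρ) (hσ : IsDensity σ) (hξ : IsDensity ξ) :
    fidelity ρ ξ + fidelity σ ξ ≤ 1 + Real.sqrt (fidelity ρ σ) := by
  obtain ⟨U, hU, hρξ⟩ := exists_unitary_trace_mul_eq_traceNorm (matSqrt ρ * matSqrt ξ)
  obtain ⟨V, hV, hσξ⟩ := exists_unitary_trace_mul_eq_traceNorm (matSqrt σ * matSqrt ξ)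
  have hρσ := norm_trace_unitary_mul_le_traceNorm (mul_mem (Unitary.star_mem hV) hU)
    (matSqrt ρ * matSqrt σ)
  have key := norm_inner_sq_add_norm_inner_sq_le (𝕜 := ℂ) (norm_purification hρ hU)
    (norm_purification hσ hV) (norm_purification hξ (one_mem _))
  rw [inner_purification hρ.1, inner_purification hσ.1, inner_purification hρ.1, star_one,
    Matrix.one_mul, Matrix.one_mul, hρξ, hσξ, Complex.norm_real, Complex.norm_real,
    Real.norm_eq_abs, Real.norm_eq_abs, sq_abs, sq_abs] at key
  rw [fidelity_eq_traceNorm_sq hρ.1 hξ.1, fidelity_eq_traceNorm_sq hσ.1 hξ.1,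
    fidelity_eq_traceNorm_sq hρ.1 hσ.1, Real.sqrt_sq_eq_abs]
  linarith [le_abs_self (traceNorm (matSqrt ρ * matSqrt σ))]
end
end

section
/- Let P and Π̃ be orthogonal projections on a finite-dimensional Hilbert space and |φ⟩ a unit vector with ‖P(I − Π̃)|φ⟩‖ ≤ η. Then for every projection Q, | ‖QP|φ⟩‖² − ‖QPΠ̃|φ⟩‖² | ≤ 2η, and consequently the trace distance between the subnormalized post-measurement states Tr_E(P|φ⟩⟨φ|P) and Tr_E(PΠ̃|φ⟩⟨φ|Π̃P) (for any partial trace Tr_E) is at most 3η. -/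
open Matrix
open scoped ComplexOrder Kronecker
noncomputable section

/-- Partial trace over the register E of an operator on W ⊗ E. -/
noncomputable def ptrE {W E : Type*} [Fintype W] [Fintype E]
    (M : Matrix (W × E) (W × E) ℂ) : Matrix W W ℂ :=
  Matrix.of fun w w' => ∑ e, M (w, e) (w', e)

/-!
Write `u = Pφ` and `v = PΠ̃φ`. Then `u - v = P(I - Π̃)φ` has norm at most `η`, while `‖u‖, ‖v‖ ≤ 1`.
A projection `Q` is a contraction, so
`‖Qu‖² - ‖Qv‖² = (‖Qu‖ - ‖Qv‖)(‖Qu‖ + ‖Qv‖)` is at most `2η` in absolute value.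

For the trace distance, `Tr(Q Tr_E M) = Tr((Q ⊗ I) M)` and `Q ⊗ I` is again a projection, so
`Tr(Q(ρ - σ)) = ‖(Q ⊗ I)u‖² - ‖(Q ⊗ I)v‖²` is at most `2η` in absolute value for every projection
`Q`. Testing this against the spectral projections of `ρ - σ` onto its nonnegative and its negative
eigenvalues gives `‖ρ - σ‖₁ ≤ 4η`, hence `TD(ρ, σ) ≤ 2η ≤ 3η`.
-/

section Projection
variable {n : Type*} [Fintype n]

theorem sum_norm_sq_eq_norm_toLp_sq (x : n → ℂ) : ∑ p, ‖x p‖ ^ 2 = ‖WithLp.toLp 2 x‖ ^ 2 :=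
  (EuclideanSpace.norm_sq_eq _).symm

theorem star_dotProduct_mulVec_of_isStarProjection {Q : Matrix n n ℂ} (hQ : IsStarProjection Q)
    (x : n → ℂ) : star x ⬝ᵥ (Q *ᵥ x) = (‖WithLp.toLp 2 (Q *ᵥ x)‖ ^ 2 : ℝ) := by
  have : star (Q *ᵥ x) ⬝ᵥ (Q *ᵥ x) = star x ⬝ᵥ (Q *ᵥ x) := by
    rw [star_mulVec, ← dotProduct_mulVec, mulVec_mulVec, ← star_eq_conjTranspose,
      hQ.isSelfAdjoint.star_eq, hQ.isIdempotentElem.eq]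
  rw [← this, dotProduct_comm, ← EuclideanSpace.inner_toLp_toLp, inner_self_eq_norm_sq_to_K]
  push_cast
  rfl

theorem trace_mul_vecMulVec_star_of_isStarProjection {Q : Matrix n n ℂ}
    (hQ : IsStarProjection Q) (x : n → ℂ) :
    trace (Q * vecMulVec x (star x)) = (‖WithLp.toLp 2 (Q *ᵥ x)‖ ^ 2 : ℝ) := by
  rw [mul_vecMulVec, trace_vecMulVec, dotProduct_comm,
    star_dotProduct_mulVec_of_isStarProjection hQ]

open scoped Matrix.Norms.L2Operator in
theorem norm_toLp_mulVec_le_of_isStarProjection [DecidableEq n] {Q : Matrix n n ℂ}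
    (hQ : IsStarProjection Q) (x : n → ℂ) : ‖WithLp.toLp 2 (Q *ᵥ x)‖ ≤ ‖WithLp.toLp 2 x‖ :=
  (Q.l2_opNorm_mulVec (WithLp.toLp 2 x)).trans
    (mul_le_of_le_one_left (norm_nonneg _) (hQ.norm_le Q))

end Projection

theorem abs_norm_sq_sub_norm_sq_le {F : Type*} [SeminormedAddCommGroup F] {u v : F}
    (hu : ‖u‖ ≤ 1) (hv : ‖v‖ ≤ 1) : |‖u‖ ^ 2 - ‖v‖ ^ 2| ≤ 2 * ‖u - v‖ := by
  rw [sq_sub_sq, abs_mul, abs_of_nonneg (by positivity : 0 ≤ ‖u‖ + ‖v‖)]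
  exact mul_le_mul (by linarith) (abs_norm_sub_norm_le u v) (abs_nonneg _) zero_le_two

theorem abs_norm_toLp_mulVec_sq_sub_le {n : Type*} [Fintype n] [DecidableEq n]
    {Q : Matrix n n ℂ} (hQ : IsStarProjection Q) {u v : n → ℂ}
    (hu : ‖WithLp.toLp 2 u‖ ≤ 1) (hv : ‖WithLp.toLp 2 v‖ ≤ 1) :
    |‖WithLp.toLp 2 (Q *ᵥ u)‖ ^ 2 - ‖WithLp.toLp 2 (Q *ᵥ v)‖ ^ 2| ≤
      2 * ‖WithLp.toLp 2 (u - v)‖ := by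
  refine (abs_norm_sq_sub_norm_sq_le
    ((norm_toLp_mulVec_le_of_isStarProjection hQ u).trans hu)
    ((norm_toLp_mulVec_le_of_isStarProjection hQ v).trans hv)).trans ?_
  rw [← WithLp.toLp_sub, ← mulVec_sub]
  gcongr
  exact norm_toLp_mulVec_le_of_isStarProjection hQ _

section TraceNorm
variable {n : Type*} [Fintype n] [DecidableEq n]

theorem matSqrt_eq_cfc {A : Matrix n n ℂ} (hA : A.PosSemidef) : matSqrt A = cfc Real.sqrt A := by
  rw [matSqrt, dif_pos hA, hA.1.cfc_eq, IsHermitian.cfc, Unitary.conjStarAlgAut_apply]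
  rfl

theorem Matrix.IsHermitian.trace_cfc {A : Matrix n n ℂ} (hA : A.IsHermitian) (f : ℝ → ℝ) :
    trace (cfc f A) = ∑ i, (f (hA.eigenvalues i) : ℂ) := by
  rw [hA.cfc_eq, IsHermitian.cfc, Unitary.conjStarAlgAut_apply, trace_mul_cycle,
    Unitary.coe_star_mul_self, one_mul, trace_diagonal]
  rfl

theorem traceNorm_eq_sum_abs_eigenvalues {A : Matrix n n ℂ} (hA : A.IsHermitian) :
    traceNorm A = ∑ i, |hA.eigenvalues i| := by
  have hsqrt : cfc Real.sqrt (Aᴴ * A) = cfc (fun x : ℝ => |x|) A := by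
    rw [hA.eq, ← sq, ← cfc_comp_pow Real.sqrt 2 A (ha := hA.isSelfAdjoint)]
    simp only [Real.sqrt_sq_eq_abs]
  rw [traceNorm, matSqrt_eq_cfc (posSemidef_conjTranspose_mul_self A), hsqrt, hA.trace_cfc]
  simp

theorem Matrix.isStarProjection_cfc_indicator (A : Matrix n n ℂ) (s : Set ℝ) :
    IsStarProjection (cfc (s.indicator 1) A) where
  isIdempotentElem := by
    rw [IsIdempotentElem, ← cfc_mul _ _ A ((Set.toFinite _).continuousOn _)
      ((Set.toFinite _).continuousOn _)]
    congr 1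
    ext x
    by_cases hx : x ∈ s <;> simp [hx]
  isSelfAdjoint := cfc_predicate _ _

theorem Matrix.IsHermitian.re_trace_cfc_indicator_mul {A : Matrix n n ℂ} (hA : A.IsHermitian)
    (s : Set ℝ) :
    (trace (cfc (s.indicator 1) A * A)).re = ∑ i, s.indicator id (hA.eigenvalues i) := by
  have hmul : cfc (s.indicator 1) A * A = cfc (s.indicator id) A := by
    calc cfc (s.indicator 1) A * A = cfc (s.indicator 1) A * cfc id A := by rw [cfc_id ℝ A]
      _ = cfc (fun x => s.indicator 1 x * id x) A :=
        (cfc_mul _ _ A ((Set.toFinite _).continuousOn _)).symm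
      _ = cfc (s.indicator id) A := by
        congr 1
        ext x
        by_cases hx : x ∈ s <;> simp [hx]
  rw [hmul, hA.trace_cfc, ← Complex.ofReal_sum, Complex.ofReal_re]

theorem traceNorm_le_of_forall_isStarProjection {A : Matrix n n ℂ} (hA : A.IsHermitian) {C : ℝ}
    (hC : ∀ Q : Matrix n n ℂ, IsStarProjection Q → |(trace (Q * A)).re| ≤ C) :
    traceNorm A ≤ 2 * C := by
  have hpos := (abs_le.mp (hC _ (isStarProjection_cfc_indicator A (Set.Ici 0)))).2
  have hneg := (abs_le.mp (hC _ (isStarProjection_cfc_indicator A (Set.Iio 0)))).1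
  rw [hA.re_trace_cfc_indicator_mul] at hpos hneg
  have habs (x : ℝ) : |x| = (Set.Ici 0).indicator id x - (Set.Iio 0).indicator id x := by
    by_cases hx : 0 ≤ x
    · simp [hx, abs_of_nonneg]
    · simp [hx, abs_of_neg (not_le.mp hx), not_le.mp hx]
  rw [traceNorm_eq_sum_abs_eigenvalues hA]
  simp only [habs, Finset.sum_sub_distrib]
  linarith

end TraceNorm

section PartialTrace
variable {W E : Type*} [Fintype W] [Fintype E]

theorem IsStarProjection.kronecker {R : Type*} [CommSemiring R] [StarRing R]
    {A : Matrix W W R} {B : Matrix E E R} (hA : IsStarProjection A) (hB : IsStarProjection B) :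
    IsStarProjection (A ⊗ₖ B) where
  isIdempotentElem := by
    rw [IsIdempotentElem, ← mul_kronecker_mul, hA.isIdempotentElem.eq, hB.isIdempotentElem.eq]
  isSelfAdjoint := by
    rw [IsSelfAdjoint, star_eq_conjTranspose, conjTranspose_kronecker,
      ← star_eq_conjTranspose, ← star_eq_conjTranspose, hA.isSelfAdjoint.star_eq,
      hB.isSelfAdjoint.star_eq]

theorem Matrix.IsHermitian.ptrE {M : Matrix (W × E) (W × E) ℂ} (hM : M.IsHermitian) :
    (ptrE M).IsHermitian := by
  ext w w'
  simp only [conjTranspose_apply, _root_.ptrE, of_apply, star_sum, hM.apply]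

theorem trace_mul_ptrE [DecidableEq E] (Q : Matrix W W ℂ) (M : Matrix (W × E) (W × E) ℂ) :
    trace (Q * ptrE M) = trace ((Q ⊗ₖ (1 : Matrix E E ℂ)) * M) := by
  simp only [trace, diag, mul_apply, ptrE, of_apply, kroneckerMap_apply, one_apply,
    Fintype.sum_prod_type, Finset.mul_sum]
  refine Finset.sum_congr rfl fun w _ => ?_
  rw [Finset.sum_comm]
  refine Finset.sum_congr rfl fun e _ => Finset.sum_congr rfl fun w' _ => ?_
  simp [mul_ite, ite_mul, Finset.sum_ite_eq]

end PartialTrace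

/-- if P, Π̃ are projections and |φ⟩ a unit vector with
‖P(I − Π̃)|φ⟩‖ ≤ η, then for every projection Q,
|‖QP|φ⟩‖² − ‖QPΠ̃|φ⟩‖²| ≤ 2η, and the trace distance between the
subnormalized post-measurement states Tr_E(P|φ⟩⟨φ|P) and
Tr_E(PΠ̃|φ⟩⟨φ|Π̃P) is at most 3η. -/
theorem projection_perturbation_bound
    {W E : Type*} [Fintype W] [DecidableEq W] [Fintype E] [DecidableEq E]
    (P Pt : Matrix (W × E) (W × E) ℂ)
    (hP : P.IsHermitian) (hPP : P * P = P)
    (hPt : Pt.IsHermitian) (hPtPt : Pt * Pt = Pt)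
    (φ : W × E → ℂ) (hφ : ∑ p, ‖φ p‖ ^ 2 = 1)
    (η : ℝ)
    (hη : ∑ p, ‖((P * ((1 : Matrix (W × E) (W × E) ℂ) - Pt)).mulVec φ) p‖ ^ 2 ≤
      η ^ 2) (hη0 : 0 ≤ η) :
    (∀ Q : Matrix (W × E) (W × E) ℂ, Q.IsHermitian → Q * Q = Q →
      |∑ p, ‖((Q * P).mulVec φ) p‖ ^ 2 -
        ∑ p, ‖((Q * P * Pt).mulVec φ) p‖ ^ 2| ≤ 2 * η) ∧
    TD (ptrE (Matrix.vecMulVec (P.mulVec φ) (star (P.mulVec φ))))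
       (ptrE (Matrix.vecMulVec ((P * Pt).mulVec φ)
          (star ((P * Pt).mulVec φ)))) ≤ 3 * η := by
  simp only [sum_norm_sq_eq_norm_toLp_sq, ← mulVec_mulVec] at *
  have hφ1 : ‖WithLp.toLp 2 φ‖ = 1 := (pow_eq_one_iff_of_nonneg (norm_nonneg _) two_ne_zero).mp hφ
  have hd : ‖WithLp.toLp 2 (P *ᵥ φ - P *ᵥ Pt *ᵥ φ)‖ ≤ η := by
    rwa [sub_mulVec, one_mulVec, mulVec_sub,
      pow_le_pow_iff_left₀ (norm_nonneg _) hη0 two_ne_zero] at hη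
  have hu := (norm_toLp_mulVec_le_of_isStarProjection ⟨hPP, hP⟩ φ).trans hφ1.le
  have hv := (norm_toLp_mulVec_le_of_isStarProjection ⟨hPP, hP⟩ _).trans
    ((norm_toLp_mulVec_le_of_isStarProjection ⟨hPtPt, hPt⟩ φ).trans hφ1.le)
  have hbound (Q : Matrix (W × E) (W × E) ℂ) (hQ : IsStarProjection Q) :
      |‖WithLp.toLp 2 (Q *ᵥ P *ᵥ φ)‖ ^ 2 - ‖WithLp.toLp 2 (Q *ᵥ P *ᵥ Pt *ᵥ φ)‖ ^ 2| ≤ 2 * η :=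
    (abs_norm_toLp_mulVec_sq_sub_le hQ hu hv).trans (by linarith)
  refine ⟨fun Q hQ hQQ => hbound Q ⟨hQQ, hQ⟩, ?_⟩
  have hherm (x : W × E → ℂ) : (ptrE (vecMulVec x (star x))).IsHermitian :=
    (posSemidef_vecMulVec_self_star x).1.ptrE
  have htn := traceNorm_le_of_forall_isStarProjection (C := 2 * η)
    ((hherm (P *ᵥ φ)).sub (hherm (P *ᵥ Pt *ᵥ φ))) fun Q hQ => by
      have hQE : IsStarProjection (Q ⊗ₖ (1 : Matrix E E ℂ)) := hQ.kronecker (.one _)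
      rw [Matrix.mul_sub, trace_sub, trace_mul_ptrE, trace_mul_ptrE,
        trace_mul_vecMulVec_star_of_isStarProjection hQE,
        trace_mul_vecMulVec_star_of_isStarProjection hQE]
      exact_mod_cast hbound _ hQE
  rw [TD]
  linarith
end
end
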